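/- For any function f: ℝ^d → [0,∞) (not necessarily measurable), for H^β-almost every x ∈ ℝ^d one has limsup_{Q → x} (1 / H^{β,Q₀}_∞(Q)) ∫_Q f dH^{β,Q₀}_∞ ≥ f(x), where the limsup is over dyadic cubes Q ∈ D(Q₀) containing x with ℓ(Q) → 0. -/

import Mathlib

open MeasureTheory Set
open scoped ENNReal NNReal

noncomputable section

/-- `ℝ^d` with the Euclidean metric. -/
abbrev Rd (d : ℕ) := EuclideanSpace ℝ (Fin d)

/-- Coerce a plain function to a point of `ℝ^d`. -/
def toRd (d : ℕ) (a : Fin d → ℝ) : Rd d := WithLp.toLp 2 a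

/-- The normalization constant `ω_β = π^{β/2}/Γ(β/2+1)`. -/
def omegaConst (β : ℝ) : ℝ := Real.pi ^ (β / 2) / Real.Gamma (β / 2 + 1)

/-- The Hausdorff content `H^β_∞` in `ℝ^d`, via countable covers by balls. -/
def hContent (d : ℕ) (β : ℝ) (E : Set (Rd d)) : ℝ≥0∞ :=
  ⨅ (c : ℕ → Rd d × ℝ) (_ : E ⊆ ⋃ i, Metric.ball (c i).1 (c i).2),
    ∑' i, ENNReal.ofReal (omegaConst β * (c i).2 ^ β)

/-- The Choquet integral of a real-valued (nonnegative) function `g` over `Ω`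
with respect to a set function `H`. -/
def choquet (d : ℕ) (H : Set (Rd d) → ℝ≥0∞) (Ω : Set (Rd d)) (g : Rd d → ℝ) : ℝ≥0∞ :=
  ∫⁻ t in Set.Ioi (0 : ℝ), H {x | x ∈ Ω ∧ t < g x}

/-- The Choquet integral of an `ℝ≥0∞`-valued function `g` over `Ω`
with respect to a set function `H`. -/
def choquetE (d : ℕ) (H : Set (Rd d) → ℝ≥0∞) (Ω : Set (Rd d)) (g : Rd d → ℝ≥0∞) : ℝ≥0∞ :=
  ∫⁻ t in Set.Ioi (0 : ℝ), H {x | x ∈ Ω ∧ ENNReal.ofReal t < g x}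

/-- Closed axis-parallel cube with corner `a` and side length `l`. -/
def cubeSet (d : ℕ) (a : Fin d → ℝ) (l : ℝ) : Set (Rd d) :=
  {y | ∀ i, a i ≤ y i ∧ y i ≤ a i + l}

/-- Open axis-parallel cube with corner `a` and side length `l`. -/
def cubeO (d : ℕ) (a : Fin d → ℝ) (l : ℝ) : Set (Rd d) :=
  {y | ∀ i, a i < y i ∧ y i < a i + l}

/-- Side length of a dyadic cube of generation `k` in the lattice with unit size `l₀`. -/
def dSide (l₀ : ℝ) (k : ℤ) : ℝ := l₀ * 2 ^ k

/-- The dyadic cube, indexed by generation `k : ℤ` and position `m : Fin d → ℤ`,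
of the dyadic lattice `D(Q₀)` generated by the cube `Q₀` with corner `a₀` and
side length `l₀`. -/
def dSet (d : ℕ) (a₀ : Fin d → ℝ) (l₀ : ℝ) (Q : ℤ × (Fin d → ℤ)) : Set (Rd d) :=
  {y | ∀ i, a₀ i + dSide l₀ Q.1 * (Q.2 i : ℝ) ≤ y i ∧
        y i < a₀ i + dSide l₀ Q.1 * ((Q.2 i : ℝ) + 1)}

/-- The dyadic Hausdorff content `H^{β,Q₀}_∞`, via countable covers by dyadic cubes. -/
def dContent (d : ℕ) (β : ℝ) (a₀ : Fin d → ℝ) (l₀ : ℝ) (E : Set (Rd d)) : ℝ≥0∞ :=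
  ⨅ (c : ℕ → ℤ × (Fin d → ℤ)) (_ : E ⊆ ⋃ i, dSet d a₀ l₀ (c i)),
    ∑' i, ENNReal.ofReal (dSide l₀ (c i).1 ^ β)

/-- The dyadic maximal function associated with `H^{β,Q₀}_∞`. -/
def dMax (d : ℕ) (β : ℝ) (a₀ : Fin d → ℝ) (l₀ : ℝ) (f : Rd d → ℝ) (x : Rd d) : ℝ≥0∞ :=
  ⨆ (Q : ℤ × (Fin d → ℤ)) (_ : x ∈ dSet d a₀ l₀ Q),
    choquet d (dContent d β a₀ l₀) (dSet d a₀ l₀ Q) (fun y => |f y|)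
      / ENNReal.ofReal (dSide l₀ Q.1 ^ β)

/-- The dyadic `β`-dimensional sharp maximal function `M^{#}_{β,Q₀}`. -/
def dSharp (d : ℕ) (β : ℝ) (a₀ : Fin d → ℝ) (l₀ : ℝ) (f : Rd d → ℝ) (x : Rd d) : ℝ≥0∞ :=
  ⨆ (Q : ℤ × (Fin d → ℤ)) (_ : x ∈ dSet d a₀ l₀ Q),
    ⨅ (c : ℝ),
      choquet d (dContent d β a₀ l₀) (dSet d a₀ l₀ Q) (fun y => |f y - c|)
        / ENNReal.ofReal (dSide l₀ Q.1 ^ β)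

/-- The `β`-dimensional sharp maximal function `M^{#}_β`, over all axis-parallel cubes. -/
def sharpMax (d : ℕ) (β : ℝ) (f : Rd d → ℝ) (x : Rd d) : ℝ≥0∞ :=
  ⨆ (a : Fin d → ℝ) (l : ℝ) (_ : 0 < l) (_ : x ∈ cubeSet d a l),
    ⨅ (c : ℝ),
      choquet d (hContent d β) (cubeSet d a l) (fun y => |f y - c|) / ENNReal.ofReal (l ^ β)

/-- The `β`-dimensional maximal operator `M_{H^β_∞}` over balls. -/
def ballMax (d : ℕ) (β : ℝ) (f : Rd d → ℝ) (x : Rd d) : ℝ≥0∞ :=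
  ⨆ (r : ℝ) (_ : 0 < r),
    choquet d (hContent d β) (Metric.ball x r) (fun y => |f y|)
      / hContent d β (Metric.ball x r)

/-- The Riesz normalization constant `γ(α)`. -/
def rieszConst (d : ℕ) (α : ℝ) : ℝ :=
  Real.pi ^ ((d : ℝ) / 2) * 2 ^ α * Real.Gamma (α / 2) / Real.Gamma (((d : ℝ) - α) / 2)

/-- The Riesz potential `I_α μ` of a measure. -/
def rieszM (d : ℕ) (α : ℝ) (μ : Measure (Rd d)) (x : Rd d) : ℝ≥0∞ :=
  (ENNReal.ofReal (rieszConst d α))⁻¹ * ∫⁻ y, ENNReal.ofReal (dist x y ^ (α - (d : ℝ))) ∂μ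

/-- The (real-valued) Riesz potential `I_α f` of a function. -/
def rieszR (d : ℕ) (α : ℝ) (f : Rd d → ℝ) (x : Rd d) : ℝ :=
  (rieszConst d α)⁻¹ * ∫ y, f y * dist x y ^ (α - (d : ℝ))

/-- The fractional maximal function `M_α μ` of a measure. -/
def fracMaxM (d : ℕ) (α : ℝ) (μ : Measure (Rd d)) (x : Rd d) : ℝ≥0∞ :=
  ⨆ (a : Fin d → ℝ) (l : ℝ) (_ : 0 < l) (_ : x ∈ cubeSet d a l),
    μ (cubeSet d a l) * ENNReal.ofReal (l ^ (α - (d : ℝ)))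

/-- The fractional maximal function `M_α f` of a function. -/
def fracMaxF (d : ℕ) (α : ℝ) (f : Rd d → ℝ) (x : Rd d) : ℝ≥0∞ :=
  ⨆ (a : Fin d → ℝ) (l : ℝ) (_ : 0 < l) (_ : x ∈ cubeSet d a l),
    (∫⁻ y in cubeSet d a l, ENNReal.ofReal |f y|) * ENNReal.ofReal (l ^ (α - (d : ℝ)))

/-- The weak `L^{p,∞}(H^β_∞)` quasinorm. -/
def weakNorm (d : ℕ) (β : ℝ) (p : ℝ) (g : Rd d → ℝ≥0∞) : ℝ≥0∞ :=
  ⨆ (t : ℝ) (_ : 0 < t),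
    ENNReal.ofReal t * hContent d β {x | ENNReal.ofReal t < g x} ^ (1 / p)

/-- The local Morrey norm `‖μ‖_{M^β(Ω)}`. -/
def morreyNorm (d : ℕ) (β : ℝ) (μ : Measure (Rd d)) (Ω : Set (Rd d)) : ℝ≥0∞ :=
  ⨆ (x : Rd d) (_ : x ∈ Ω) (r : ℝ) (_ : 0 < r),
    μ (Metric.ball x r ∩ Ω) / ENNReal.ofReal (r ^ β)

/-- Generation-`k` cell at position `m` of a dyadic grid with generation offsets `o`. -/
def gcell (d : ℕ) (o : ℤ → Fin d → ℝ) (k : ℤ) (m : Fin d → ℤ) : Set (Rd d) :=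
  {y | ∀ i, o k i + 2 ^ k * (m i : ℝ) ≤ y i ∧ y i < o k i + 2 ^ k * ((m i : ℝ) + 1)}

/-- A dyadic grid in `ℝ^d`: each generation `k` consists of half-open cubes of side `2^k`
partitioning `ℝ^d`, and consecutive generations are nested. -/
structure DyadicGrid (d : ℕ) where
  o : ℤ → Fin d → ℝ
  nested : ∀ k m, ∃ m', gcell d o k m ⊆ gcell d o (k + 1) m'

/-- The dyadic Riesz potential `I^D_α μ` with respect to a dyadic grid. -/
def dyadicRiesz (d : ℕ) (G : DyadicGrid d) (α : ℝ) (μ : Measure (Rd d)) (x : Rd d) : ℝ≥0∞ :=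
  ∑' p : ℤ × (Fin d → ℤ),
    Set.indicator (gcell d G.o p.1 p.2)
      (fun _ => μ (gcell d G.o p.1 p.2) * ENNReal.ofReal (((2 : ℝ) ^ p.1) ^ (α - (d : ℝ)))) x

/-- The exponential on `ℝ≥0∞`. -/
def expE (t : ℝ≥0∞) : ℝ≥0∞ := if t = ∞ then ∞ else ENNReal.ofReal (Real.exp t.toReal)

/-!
Let `x` be a point whose dyadic averages of `f` stay below `f x - ε` on all cubes of
generation at most `K` containing it. Unless `x` lies in a dyadic cube of zero content,
choose rationals `q < f x` and `ρ < 1` with `f x - ε ≤ q ρ`; Chebyshev's inequality for the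
Choquet integral then says that the level set `{f > q}` has relative content at most `ρ` in
each of these cubes, so `x` is a point of `{f > q}` of upper density at most `ρ`.
Such points form a null set for the dyadic content: covering them, inside a cube of
generation `K`, near-optimally by cubes of generation at most `K` shows that their content is
at most `ρ` times itself. Only countably many `q`, `ρ`, `K` and cubes are involved, and the
dyadic content dominates `H^β_∞` up to a constant.
-/

open Filter Topology

lemma ofReal_mul_le_choquet {d : ℕ} {H : Set (Rd d) → ℝ≥0∞} (hH : Monotone H)
    (q : ℝ) (Ω : Set (Rd d)) (f : Rd d → ℝ) :
    ENNReal.ofReal q * H {x | x ∈ Ω ∧ q < f x} ≤ choquet d H Ω f := by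
  calc ENNReal.ofReal q * H {x | x ∈ Ω ∧ q < f x}
      = ∫⁻ _ in Ioo (0 : ℝ) q, H {x | x ∈ Ω ∧ q < f x} := by
        rw [setLIntegral_const, Real.volume_Ioo, sub_zero, mul_comm]
    _ ≤ ∫⁻ t in Ioo (0 : ℝ) q, H {x | x ∈ Ω ∧ t < f x} :=
        setLIntegral_mono' measurableSet_Ioo fun t ht =>
          hH fun x hx => ⟨hx.1, ht.2.trans hx.2⟩
    _ ≤ choquet d H Ω f := lintegral_mono_set Ioo_subset_Ioi_self

lemma omegaConst_pos {β : ℝ} (hβ : 0 ≤ β) : 0 < omegaConst β :=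
  div_pos (Real.rpow_pos_of_pos Real.pi_pos _) (Real.Gamma_pos_of_pos (by linarith))

section DyadicContent

variable {d : ℕ} {β : ℝ} {a₀ : Fin d → ℝ} {l₀ : ℝ}

lemma dSide_pos (hl₀ : 0 < l₀) (k : ℤ) : 0 < dSide l₀ k :=
  mul_pos hl₀ (zpow_pos two_pos k)

lemma dSide_mono (hl₀ : 0 ≤ l₀) : Monotone (dSide l₀) :=
  fun _ _ h => mul_le_mul_of_nonneg_left (zpow_le_zpow_right₀ one_le_two h) hl₀

lemma exists_mem_dSet (hl₀ : 0 < l₀) (x : Rd d) (k : ℤ) :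
    ∃ m : Fin d → ℤ, x ∈ dSet d a₀ l₀ (k, m) := by
  have hs := dSide_pos hl₀ k
  refine ⟨fun i => ⌊(x i - a₀ i) / dSide l₀ k⌋, fun i => ⟨?_, ?_⟩⟩
  · have := (le_div_iff₀ hs).1 (Int.floor_le ((x i - a₀ i) / dSide l₀ k))
    linarith
  · have := (div_lt_iff₀ hs).1 (Int.lt_floor_add_one ((x i - a₀ i) / dSide l₀ k))
    linarith

lemma exists_ofReal_dSide_rpow_lt (hβ : 0 < β) {δ : ℝ≥0∞} (hδ : 0 < δ) :
    ∃ k : ℤ, ENNReal.ofReal (dSide l₀ k ^ β) < δ := by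
  have hside : Tendsto (fun n : ℕ => dSide l₀ (-n)) atTop (𝓝 0) := by
    simpa [dSide, zpow_neg, ← inv_pow] using
      (tendsto_pow_atTop_nhds_zero_of_lt_one (by norm_num : (0 : ℝ) ≤ 2⁻¹)
        (by norm_num)).const_mul l₀
  have hcost : Tendsto (fun n : ℕ => ENNReal.ofReal (dSide l₀ (-n) ^ β)) atTop (𝓝 0) := by
    simpa [Real.zero_rpow hβ.ne'] using ENNReal.tendsto_ofReal
      ((Real.continuousAt_rpow_const 0 β (Or.inr hβ.le)).tendsto.comp hside)
  obtain ⟨n, hn⟩ := (hcost.eventually (gt_mem_nhds hδ)).exists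
  exact ⟨-n, hn⟩

lemma dContent_le_tsum {S : Set (Rd d)} (c : ℕ → ℤ × (Fin d → ℤ))
    (hc : S ⊆ ⋃ i, dSet d a₀ l₀ (c i)) :
    dContent d β a₀ l₀ S ≤ ∑' i, ENNReal.ofReal (dSide l₀ (c i).1 ^ β) :=
  iInf₂_le c hc

lemma exists_cover_tsum_lt {S : Set (Rd d)} {r : ℝ≥0∞} (h : dContent d β a₀ l₀ S < r) :
    ∃ c : ℕ → ℤ × (Fin d → ℤ), S ⊆ ⋃ i, dSet d a₀ l₀ (c i) ∧
      ∑' i, ENNReal.ofReal (dSide l₀ (c i).1 ^ β) < r := by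
  simpa only [dContent, iInf_lt_iff, exists_prop] using h

lemma dContent_mono : Monotone (dContent d β a₀ l₀) :=
  fun _ _ h => le_iInf₂ fun c hc => iInf₂_le c (h.trans hc)

lemma exists_tsum_ofReal_dSide_rpow_le (hβ : 0 < β) {ε : ℝ≥0∞} (hε : ε ≠ 0) :
    ∃ c : ℕ → ℤ × (Fin d → ℤ), ∑' i, ENNReal.ofReal (dSide l₀ (c i).1 ^ β) ≤ ε := by
  obtain ⟨δ, hδpos, hδsum⟩ := ENNReal.exists_pos_sum_of_countable hε ℕ
  choose k hk using fun n => exists_ofReal_dSide_rpow_lt (l₀ := l₀) hβ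
    (ENNReal.coe_pos.2 (hδpos n))
  exact ⟨fun n => (k n, 0), (ENNReal.tsum_le_tsum fun n => (hk n).le).trans hδsum.le⟩

lemma dContent_empty (hβ : 0 < β) : dContent d β a₀ l₀ ∅ = 0 := by
  refine le_antisymm (ENNReal.le_of_forall_pos_le_add fun ε hε _ => ?_) zero_le
  obtain ⟨c, hc⟩ := exists_tsum_ofReal_dSide_rpow_le (d := d) (l₀ := l₀) hβ
    (ENNReal.coe_ne_zero.2 hε.ne')
  simpa using (dContent_le_tsum (a₀ := a₀) c (empty_subset _)).trans hc

lemma dContent_dSet_le (hβ : 0 < β) (p : ℤ × (Fin d → ℤ)) :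
    dContent d β a₀ l₀ (dSet d a₀ l₀ p) ≤ ENNReal.ofReal (dSide l₀ p.1 ^ β) := by
  refine ENNReal.le_of_forall_pos_le_add fun ε hε _ => ?_
  obtain ⟨c, hc⟩ := exists_tsum_ofReal_dSide_rpow_le (d := d) (l₀ := l₀) hβ
    (ENNReal.coe_ne_zero.2 hε.ne')
  calc dContent d β a₀ l₀ (dSet d a₀ l₀ p)
      ≤ ∑' n, ENNReal.ofReal (dSide l₀ ((Nat.casesOn n p c : ℤ × (Fin d → ℤ))).1 ^ β) :=
        dContent_le_tsum _ (subset_iUnion_of_subset 0 subset_rfl)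
    _ ≤ ENNReal.ofReal (dSide l₀ p.1 ^ β) + ε := by
        rw [tsum_eq_zero_add' ENNReal.summable]
        exact add_le_add le_rfl hc

lemma dContent_ne_top_of_subset_dSet (hβ : 0 < β) {S : Set (Rd d)} {p : ℤ × (Fin d → ℤ)}
    (h : S ⊆ dSet d a₀ l₀ p) : dContent d β a₀ l₀ S ≠ ∞ :=
  ne_top_of_le_ne_top ENNReal.ofReal_ne_top ((dContent_mono h).trans (dContent_dSet_le hβ p))

lemma dContent_iUnion_le (S : ℕ → Set (Rd d)) :
    dContent d β a₀ l₀ (⋃ n, S n) ≤ ∑' n, dContent d β a₀ l₀ (S n) := by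
  refine ENNReal.le_of_forall_pos_le_add fun ε hε hfin => ?_
  obtain ⟨δ, hδpos, hδsum⟩ :=
    ENNReal.exists_pos_sum_of_countable (ENNReal.coe_ne_zero.2 hε.ne') ℕ
  choose c hcov hsum using fun n => exists_cover_tsum_lt (ENNReal.lt_add_right
    (ENNReal.ne_top_of_tsum_ne_top hfin.ne n) (ENNReal.coe_ne_zero.2 (hδpos n).ne'))
  let C : ℕ → ℤ × (Fin d → ℤ) := fun i => c (Nat.unpair i).1 (Nat.unpair i).2
  have hC : (⋃ n, S n) ⊆ ⋃ i, dSet d a₀ l₀ (C i) := by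
    refine iUnion_subset fun n x hx => ?_
    obtain ⟨j, hj⟩ := mem_iUnion.1 (hcov n hx)
    exact mem_iUnion.2 ⟨Nat.pair n j, by simpa [C] using hj⟩
  calc dContent d β a₀ l₀ (⋃ n, S n)
      ≤ ∑' i, ENNReal.ofReal (dSide l₀ (C i).1 ^ β) := dContent_le_tsum C hC
    _ = ∑' n, ∑' j, ENNReal.ofReal (dSide l₀ (c n j).1 ^ β) := by
        rw [← ENNReal.tsum_prod, ← Nat.pairEquiv.symm.tsum_eq]
        rfl
    _ ≤ ∑' n, (dContent d β a₀ l₀ (S n) + δ n) := ENNReal.tsum_le_tsum fun n => (hsum n).le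
    _ ≤ ∑' n, dContent d β a₀ l₀ (S n) + ε := by
        rw [ENNReal.tsum_add]
        exact add_le_add le_rfl hδsum.le

lemma dSet_subset_ball (hl₀ : 0 < l₀) (p : ℤ × (Fin d → ℤ)) :
    dSet d a₀ l₀ p ⊆ Metric.ball (toRd d fun i => a₀ i + dSide l₀ p.1 * p.2 i)
      (((d : ℝ) + 1) * dSide l₀ p.1) := by
  intro y hy
  have hs := dSide_pos hl₀ p.1
  have hcoord : ∀ i, dist (y i) (a₀ i + dSide l₀ p.1 * p.2 i) ^ 2 ≤ dSide l₀ p.1 ^ 2 := by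
    intro i
    have := hy i
    rw [Real.dist_eq, sq_abs]
    nlinarith
  rw [Metric.mem_ball, EuclideanSpace.dist_eq, Real.sqrt_lt' (by positivity)]
  calc ∑ i, dist (y i) (a₀ i + dSide l₀ p.1 * p.2 i) ^ 2
      ≤ ∑ _i : Fin d, dSide l₀ p.1 ^ 2 := Finset.sum_le_sum fun i _ => hcoord i
    _ = d * dSide l₀ p.1 ^ 2 := by simp
    _ < (((d : ℝ) + 1) * dSide l₀ p.1) ^ 2 := by nlinarith

lemma hContent_le_mul_dContent (hβ : 0 ≤ β) (hl₀ : 0 < l₀) (S : Set (Rd d)) :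
    hContent d β S ≤
      ENNReal.ofReal (omegaConst β * ((d : ℝ) + 1) ^ β) * dContent d β a₀ l₀ S := by
  have hC : ENNReal.ofReal (omegaConst β * ((d : ℝ) + 1) ^ β) ≠ 0 :=
    (ENNReal.ofReal_pos.2 (mul_pos (omegaConst_pos hβ) (by positivity))).ne'
  rw [dContent, ENNReal.mul_iInf_of_ne hC ENNReal.ofReal_ne_top]
  refine le_iInf fun c => ?_
  rw [ENNReal.mul_iInf_of_ne hC ENNReal.ofReal_ne_top]
  refine le_iInf fun hc => ?_
  let ball : ℕ → Rd d × ℝ := fun n =>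
    (toRd d fun i => a₀ i + dSide l₀ (c n).1 * (c n).2 i, ((d : ℝ) + 1) * dSide l₀ (c n).1)
  have hball : S ⊆ ⋃ n, Metric.ball (ball n).1 (ball n).2 :=
    hc.trans (iUnion_mono fun n => dSet_subset_ball hl₀ (c n))
  refine (iInf₂_le ball hball).trans (le_of_eq ?_)
  rw [← ENNReal.tsum_mul_left]
  refine tsum_congr fun n => ?_
  rw [← ENNReal.ofReal_mul (mul_pos (omegaConst_pos hβ) (by positivity)).le,
    Real.mul_rpow (by positivity) (dSide_pos hl₀ _).le, mul_assoc]

end DyadicContent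

def dContentOuterMeasure (d : ℕ) (β : ℝ) (a₀ : Fin d → ℝ) (l₀ : ℝ) (hβ : 0 < β) :
    OuterMeasure (Rd d) where
  measureOf := dContent d β a₀ l₀
  empty := dContent_empty hβ
  mono := fun h => dContent_mono h
  iUnion_nat := fun S _ => dContent_iUnion_le S

def lowDensitySet (d : ℕ) (β : ℝ) (a₀ : Fin d → ℝ) (l₀ : ℝ) (E : Set (Rd d)) (θ : ℝ≥0∞)
    (K : ℤ) : Set (Rd d) :=
  {x ∈ E | ∀ Q : ℤ × (Fin d → ℤ), Q.1 ≤ K → x ∈ dSet d a₀ l₀ Q →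
    dContent d β a₀ l₀ (dSet d a₀ l₀ Q ∩ E) ≤ θ * dContent d β a₀ l₀ (dSet d a₀ l₀ Q)}

section LowDensity

variable {d : ℕ} {β : ℝ} {a₀ : Fin d → ℝ} {l₀ : ℝ} {E : Set (Rd d)} {θ : ℝ≥0∞} {K : ℤ}

lemma dContent_lowDensitySet_inter_dSet_le_mul_self (hβ : 0 < β) (hl₀ : 0 < l₀) (hθ : θ ≤ 1)
    (m : Fin d → ℤ) :
    dContent d β a₀ l₀ (lowDensitySet d β a₀ l₀ E θ K ∩ dSet d a₀ l₀ (K, m)) ≤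
      θ * dContent d β a₀ l₀ (lowDensitySet d β a₀ l₀ E θ K ∩ dSet d a₀ l₀ (K, m)) := by
  set A := lowDensitySet d β a₀ l₀ E θ K ∩ dSet d a₀ l₀ (K, m)
  have hA : dContent d β a₀ l₀ A ≠ ∞ := dContent_ne_top_of_subset_dSet hβ inter_subset_right
  refine ENNReal.le_of_forall_pos_le_add fun ε hε _ => ?_
  obtain ⟨c, hcov, hsum⟩ := exists_cover_tsum_lt (β := β)
    (ENNReal.lt_add_right hA (ENNReal.coe_ne_zero.2 hε.ne'))
  -- Cubes above generation `K` may be replaced by the cube `(K, m)`, which already contains `A`.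
  let c' : ℕ → ℤ × (Fin d → ℤ) := fun n => if (c n).1 ≤ K then c n else (K, m)
  have hcov' : A ⊆ ⋃ n, A ∩ dSet d a₀ l₀ (c' n) := by
    intro x hx
    obtain ⟨n, hn⟩ := mem_iUnion.1 (hcov hx)
    refine mem_iUnion.2 ⟨n, hx, ?_⟩
    by_cases h : (c n).1 ≤ K
    · simpa [c', h] using hn
    · simpa [c', h] using hx.2
  have hpiece : ∀ n, dContent d β a₀ l₀ (A ∩ dSet d a₀ l₀ (c' n)) ≤
      θ * ENNReal.ofReal (dSide l₀ (c n).1 ^ β) := by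
    intro n
    have hgen : (c' n).1 ≤ K := by by_cases h : (c n).1 ≤ K <;> simp [c', h]
    have hside : dSide l₀ (c' n).1 ≤ dSide l₀ (c n).1 := by
      by_cases h : (c n).1 ≤ K
      · simp [c', h]
      · simpa [c', h] using dSide_mono hl₀.le (not_le.1 h).le
    rcases eq_empty_or_nonempty (A ∩ dSet d a₀ l₀ (c' n)) with hempty | ⟨x, ⟨hxL, -⟩, hx⟩
    · simp [hempty, dContent_empty hβ]
    calc dContent d β a₀ l₀ (A ∩ dSet d a₀ l₀ (c' n))
        ≤ dContent d β a₀ l₀ (dSet d a₀ l₀ (c' n) ∩ E) :=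
          dContent_mono fun y hy => ⟨hy.2, hy.1.1.1⟩
      _ ≤ θ * dContent d β a₀ l₀ (dSet d a₀ l₀ (c' n)) := hxL.2 _ hgen hx
      _ ≤ θ * ENNReal.ofReal (dSide l₀ (c n).1 ^ β) := by
          gcongr
          exact (dContent_dSet_le hβ _).trans (ENNReal.ofReal_le_ofReal
            (Real.rpow_le_rpow (dSide_pos hl₀ _).le hside hβ.le))
  calc dContent d β a₀ l₀ A
      ≤ ∑' n, dContent d β a₀ l₀ (A ∩ dSet d a₀ l₀ (c' n)) :=
        (dContent_mono hcov').trans (dContent_iUnion_le _)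
    _ ≤ ∑' n, θ * ENNReal.ofReal (dSide l₀ (c n).1 ^ β) := ENNReal.tsum_le_tsum hpiece
    _ ≤ θ * (dContent d β a₀ l₀ A + ε) := by
        rw [ENNReal.tsum_mul_left]
        gcongr
    _ ≤ θ * dContent d β a₀ l₀ A + ε := by
        rw [mul_add]
        exact add_le_add le_rfl (mul_le_of_le_one_left' hθ)

lemma dContent_lowDensitySet_eq_zero (hβ : 0 < β) (hl₀ : 0 < l₀) (hθ : θ < 1) :
    dContent d β a₀ l₀ (lowDensitySet d β a₀ l₀ E θ K) = 0 := by
  have hcover : lowDensitySet d β a₀ l₀ E θ K ⊆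
      ⋃ m, lowDensitySet d β a₀ l₀ E θ K ∩ dSet d a₀ l₀ (K, m) := fun x hx =>
    mem_iUnion.2 ((exists_mem_dSet hl₀ x K).imp fun _ hm => ⟨hx, hm⟩)
  refine measure_mono_null (μ := dContentOuterMeasure d β a₀ l₀ hβ) hcover
    (measure_iUnion_null fun m => ?_)
  change dContent d β a₀ l₀ (lowDensitySet d β a₀ l₀ E θ K ∩ dSet d a₀ l₀ (K, m)) = 0
  have hfin : dContent d β a₀ l₀ (lowDensitySet d β a₀ l₀ E θ K ∩ dSet d a₀ l₀ (K, m)) ≠ ∞ :=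
    dContent_ne_top_of_subset_dSet hβ inter_subset_right
  by_contra hne
  exact (dContent_lowDensitySet_inter_dSet_le_mul_self hβ hl₀ hθ.le m).not_gt
    (by simpa using (ENNReal.mul_lt_mul_iff_left hne hfin).2 hθ)

lemma exists_mem_lowDensitySet_of_average_lt (hβ : 0 < β) {f : Rd d → ℝ} {x : Rd d}
    {t : ℝ} (ht : 0 ≤ t) (htx : t < f x)
    (hpos : ∀ Q, x ∈ dSet d a₀ l₀ Q → dContent d β a₀ l₀ (dSet d a₀ l₀ Q) ≠ 0)
    (havg : ∀ Q : ℤ × (Fin d → ℤ), Q.1 ≤ K → x ∈ dSet d a₀ l₀ Q →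
      choquet d (dContent d β a₀ l₀) (dSet d a₀ l₀ Q) f / dContent d β a₀ l₀ (dSet d a₀ l₀ Q)
        < ENNReal.ofReal t) :
    ∃ q ρ : ℚ, (ρ : ℝ) < 1 ∧
      x ∈ lowDensitySet d β a₀ l₀ {y | (q : ℝ) < f y} (ENNReal.ofReal ρ) K := by
  obtain ⟨q, htq, hqx⟩ := exists_rat_btwn htx
  have hq : 0 < (q : ℝ) := ht.trans_lt htq
  obtain ⟨ρ, htρ, hρ⟩ := exists_rat_btwn ((div_lt_one hq).2 htq)
  refine ⟨q, ρ, hρ, hqx, fun Q hQK hxQ => ?_⟩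
  by_contra! hdense
  refine (havg Q hQK hxQ).not_ge ?_
  rw [ENNReal.le_div_iff_mul_le (Or.inl (hpos Q hxQ))
    (Or.inl (dContent_ne_top_of_subset_dSet hβ subset_rfl))]
  calc ENNReal.ofReal t * dContent d β a₀ l₀ (dSet d a₀ l₀ Q)
      ≤ ENNReal.ofReal q * (ENNReal.ofReal ρ * dContent d β a₀ l₀ (dSet d a₀ l₀ Q)) := by
        rw [← mul_assoc, ← ENNReal.ofReal_mul hq.le]
        gcongr
        linarith [(div_lt_iff₀' hq).1 htρ]
    _ ≤ ENNReal.ofReal q * dContent d β a₀ l₀ {y | y ∈ dSet d a₀ l₀ Q ∧ (q : ℝ) < f y} := by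
        gcongr
        exact hdense.le
    _ ≤ choquet d (dContent d β a₀ l₀) (dSet d a₀ l₀ Q) f :=
        ofReal_mul_le_choquet dContent_mono _ _ f

end LowDensity

theorem dyadic_density_limsup_general (d : ℕ) (β : ℝ) (hβ : 0 < β)
    (a₀ : Fin d → ℝ) (l₀ : ℝ) (hl₀ : 0 < l₀) (f : Rd d → ℝ) :
    hContent d β {x | ¬ ∀ ε : ℝ, 0 < ε → ∀ K : ℤ, ∃ Q : ℤ × (Fin d → ℤ), Q.1 ≤ K ∧
        x ∈ dSet d a₀ l₀ Q ∧
        ENNReal.ofReal (f x - ε) ≤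
          choquet d (dContent d β a₀ l₀) (dSet d a₀ l₀ Q) f /
            dContent d β a₀ l₀ (dSet d a₀ l₀ Q)} = 0 := by
  refine nonpos_iff_eq_zero.1 ((hContent_le_mul_dContent (a₀ := a₀) hβ.le hl₀ _).trans_eq
    (mul_eq_zero_of_right _ ?_))
  let μ := dContentOuterMeasure d β a₀ l₀ hβ
  have hnull_cubes :
      μ (⋃ (Q) (_ : dContent d β a₀ l₀ (dSet d a₀ l₀ Q) = 0), dSet d a₀ l₀ Q) = 0 :=
    measure_iUnion_null fun Q => measure_iUnion_null id
  have hnull_lowDensity : μ (⋃ (q : ℚ) (ρ : ℚ) (K : ℤ) (_ : (ρ : ℝ) < 1),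
      lowDensitySet d β a₀ l₀ {y | (q : ℝ) < f y} (ENNReal.ofReal ρ) K) = 0 :=
    measure_iUnion_null fun q => measure_iUnion_null fun ρ => measure_iUnion_null fun K =>
      measure_iUnion_null fun hρ =>
        dContent_lowDensitySet_eq_zero hβ hl₀ (ENNReal.ofReal_lt_one.2 hρ)
  refine measure_mono_null (μ := μ) ?_ (measure_union_null hnull_cubes hnull_lowDensity)
  intro x hx
  push Not at hx
  obtain ⟨ε, hε, K, hK⟩ := hx
  by_cases hzero : ∃ Q, x ∈ dSet d a₀ l₀ Q ∧ dContent d β a₀ l₀ (dSet d a₀ l₀ Q) = 0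
  · obtain ⟨Q, hxQ, hQ⟩ := hzero
    exact Or.inl (mem_iUnion₂.2 ⟨Q, hQ, hxQ⟩)
  · push Not at hzero
    obtain ⟨m, hm⟩ := exists_mem_dSet (a₀ := a₀) hl₀ x K
    have ht : 0 < f x - ε := ENNReal.ofReal_pos.1 (zero_le.trans_lt (hK _ le_rfl hm))
    obtain ⟨q, ρ, hρ, hxq⟩ :=
      exists_mem_lowDensitySet_of_average_lt hβ ht.le (by linarith) hzero hK
    exact Or.inr (by simp only [mem_iUnion]; exact ⟨q, ρ, K, hρ, hxq⟩)

/-- Lebesgue-type differentiation for dyadic Hausdorff content: for `H^β`-a.e. `x`,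
the limsup of dyadic averages of `f` on cubes shrinking to `x` is at least `f x`. -/
theorem dyadic_density_limsup (d : ℕ) (β : ℝ) (hβ : 0 < β) (hβd : β ≤ d)
    (a₀ : Fin d → ℝ) (l₀ : ℝ) (hl₀ : 0 < l₀) (f : Rd d → ℝ) (hf : ∀ x, 0 ≤ f x) :
    hContent d β {x | ¬ ∀ ε : ℝ, 0 < ε → ∀ K : ℤ, ∃ Q : ℤ × (Fin d → ℤ), Q.1 ≤ K ∧
        x ∈ dSet d a₀ l₀ Q ∧
        ENNReal.ofReal (f x - ε) ≤
          choquet d (dContent d β a₀ l₀) (dSet d a₀ l₀ Q) f /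
            dContent d β a₀ l₀ (dSet d a₀ l₀ Q)} = 0 :=
  dyadic_density_limsup_general d β hβ a₀ l₀ hl₀ f
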